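/- arXiv:1605.07670 — 3 statements merged into one kernel-verified Lean document; each statement's English description precedes it below -/
import Mathlib

section
/- (Continuity of fractional velocity forces vanishing) Let 0 < β < 1. Suppose υ⁺_β f(y) exists finitely for all y in a right neighborhood of x and that the map y ↦ υ⁺_β f(y) is right-continuous at x. Then υ⁺_β f(x) = 0. -/
open Filter Topology Set

open MeasureTheory

/-!
If `v x > 0`, then `v > m := v x / 2` on a right neighbourhood `t` of `x`, so at every `y ∈ t`
we have `f (y + h) - f y ≥ m * h ^ β` for small `h > 0`. Countable subadditivity of (outer)
measure makes this uniform on a non-null piece `s ⊆ t` of small diameter, on which `f` is then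
increasing. By Lebesgue's theorem `f` is differentiable within `s` at almost every point of `s`,
and all but countably many points of `s` are right accumulation points of `s`; at such a point
the slopes are at least `m * (z - y) ^ (β - 1) → ∞` because `β < 1`. The case `v x < 0` is the
case `v x > 0` for `-f`.
-/

lemma exists_subset_measure_ne_zero_forall_lt {μ : Measure ℝ} {t : Set ℝ} (ht : μ t ≠ 0)
    {P : ℝ → ℝ → Prop} (hP : ∀ y ∈ t, ∀ᶠ h in 𝓝[>] 0, P y h) :
    ∃ s ⊆ t, μ s ≠ 0 ∧ ∀ y ∈ s, ∀ z ∈ s, y < z → P y (z - y) := by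
  set E : ℕ → Set ℝ := fun n => {y ∈ t | ∀ h ∈ Ioo 0 (1 / (n + 1 : ℝ)), P y h}
  set S : ℕ × ℤ → Set ℝ := fun p =>
    E p.1 ∩ Ico (p.2 • (1 / (p.1 + 1 : ℝ))) ((p.2 + 1) • (1 / (p.1 + 1 : ℝ)))
  have hcover : t ⊆ ⋃ p, S p := by
    intro y hy
    obtain ⟨u, hu, hsub⟩ := mem_nhdsGT_iff_exists_Ioo_subset.1 (hP y hy)
    obtain ⟨n, hn⟩ := exists_nat_one_div_lt (mem_Ioi.1 hu)
    have hyE : y ∈ E n := ⟨hy, fun h hh => hsub ⟨hh.1, hh.2.trans hn⟩⟩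
    have hyI := (iUnion_Ico_zsmul (Nat.one_div_pos_of_nat (α := ℝ) (n := n))).symm ▸ mem_univ y
    obtain ⟨k, hk⟩ := mem_iUnion.1 hyI
    exact mem_iUnion.2 ⟨(n, k), hyE, hk⟩
  obtain ⟨⟨n, k⟩, hS⟩ : ∃ p, μ (S p) ≠ 0 := by
    by_contra! h
    exact ht (measure_mono_null hcover (measure_iUnion_null h))
  refine ⟨S (n, k), fun y hy => hy.1.1, hS, fun y hy z hz hyz => hy.1.2 _ ⟨sub_pos.2 hyz, ?_⟩⟩
  have hy := hy.2.1
  have hz := hz.2.2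
  simp only [add_smul, one_smul] at hz
  linarith

lemma tendsto_rpow_sub_nhdsGT {β : ℝ} (hβ : β < 0) (y : ℝ) :
    Tendsto (fun z => (z - y) ^ β) (𝓝[>] y) atTop := by
  have hsub : Tendsto (· - y) (𝓝[>] y) (𝓝[>] 0) := by
    have := (map_subRight_nhdsGT (c := y) (a := y)).le
    rwa [sub_self] at this
  exact (tendsto_rpow_neg_nhdsGT_zero hβ).comp hsub

lemma not_differentiableWithinAt_of_rpow_le_sub {g : ℝ → ℝ} {s : Set ℝ} {m β y : ℝ}
    (hβ : β < 1) (hm : 0 < m) (hs : ∀ z ∈ s, y < z → m * (z - y) ^ β ≤ g z - g y)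
    (hacc : (𝓝[s ∩ Ioi y] y).NeBot) : ¬ DifferentiableWithinAt ℝ g s y := by
  intro hdiff
  have hslope : Tendsto (slope g y) (𝓝[s ∩ Ioi y] y) (𝓝 (derivWithin g s y)) :=
    (hasDerivWithinAt_iff_tendsto_slope.1 hdiff.hasDerivWithinAt).mono_left
      (nhdsWithin_mono _ fun z hz => ⟨hz.1, hz.2.ne'⟩)
  have hlower : Tendsto (fun z => m * (z - y) ^ (β - 1)) (𝓝[s ∩ Ioi y] y) atTop :=
    ((tendsto_rpow_sub_nhdsGT (by linarith) y).const_mul_atTop hm).mono_left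
      (nhdsWithin_mono _ inter_subset_right)
  refine not_tendsto_nhds_of_tendsto_atTop (tendsto_atTop_mono' _ ?_ hlower) _ hslope
  filter_upwards [self_mem_nhdsWithin] with z ⟨hzs, hyz⟩
  have hzy : 0 < z - y := sub_pos.2 hyz
  rw [slope_def_field, Real.rpow_sub_one hzy.ne', ← mul_div_assoc]
  exact div_le_div_of_nonneg_right (hs z hzs hyz) hzy.le

lemma volume_eq_zero_of_rpow_le_sub {g : ℝ → ℝ} {s : Set ℝ} {m β : ℝ} (hβ : β < 1) (hm : 0 < m)
    (hs : ∀ y ∈ s, ∀ z ∈ s, y < z → m * (z - y) ^ β ≤ g z - g y) : volume s = 0 := by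
  have hmono : MonotoneOn g s := fun y hy z hz hyz => by
    rcases hyz.eq_or_lt with rfl | hlt
    · exact le_rfl
    · exact sub_nonneg.1 <|
        (mul_pos hm (Real.rpow_pos_of_pos (sub_pos.2 hlt) β)).le.trans (hs y hy z hz hlt)
  rw [measure_eq_zero_iff_ae_notMem]
  filter_upwards [hmono.ae_differentiableWithinAt_of_mem,
    countable_setOfPred_isolated_right_within.ae_notMem volume] with y hdiff hisolated hys
  have hacc : (𝓝[s ∩ Ioi y] y).NeBot := ⟨fun h => hisolated ⟨hys, h⟩⟩
  exact not_differentiableWithinAt_of_rpow_le_sub hβ hm (hs y hys) hacc (hdiff hys)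

lemma volume_eq_zero_of_forall_eventually_rpow_le_sub {g : ℝ → ℝ} {t : Set ℝ} {m β : ℝ}
    (hβ : β < 1) (hm : 0 < m) (ht : ∀ y ∈ t, ∀ᶠ h in 𝓝[>] 0, m * h ^ β ≤ g (y + h) - g y) :
    volume t = 0 := by
  by_contra hne
  obtain ⟨s, -, hs, hgrowth⟩ := exists_subset_measure_ne_zero_forall_lt hne ht
  refine hs (volume_eq_zero_of_rpow_le_sub (g := g) hβ hm fun y hy z hz hyz => ?_)
  simpa using hgrowth y hy z hz hyz

lemma eventually_mul_rpow_le_sub_of_tendsto {f : ℝ → ℝ} {y β m w : ℝ}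
    (hf : Tendsto (fun ε => (f (y + ε) - f y) / ε ^ β) (𝓝[>] 0) (𝓝 w)) (hm : m < w) :
    ∀ᶠ h in 𝓝[>] 0, m * h ^ β ≤ f (y + h) - f y := by
  filter_upwards [hf.eventually_const_lt hm, self_mem_nhdsWithin] with h hlt hpos
  exact ((lt_div_iff₀ (Real.rpow_pos_of_pos hpos β)).1 hlt).le

lemma volume_pos_of_mem_nhdsGE {x : ℝ} {t : Set ℝ} (ht : t ∈ 𝓝[≥] x) : 0 < volume t := by
  obtain ⟨u, hu, hsub⟩ := mem_nhdsGE_iff_exists_Ico_subset.1 ht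
  calc (0 : ENNReal) < volume (Ico x u) := by simpa using mem_Ioi.1 hu
    _ ≤ volume t := measure_mono hsub

lemma velocity_nonpos_of_continuousWithinAt {f v : ℝ → ℝ} {x β : ℝ} (hβ : β < 1)
    (hvel : ∀ᶠ y in 𝓝[≥] x,
      Tendsto (fun ε => (f (y + ε) - f y) / ε ^ β) (𝓝[>] 0) (𝓝 (v y)))
    (hcont : ContinuousWithinAt v (Ici x) x) :
    v x ≤ 0 := by
  by_contra! hpos
  have hnear : ∀ᶠ y in 𝓝[≥] x, v x / 2 < v y := hcont.eventually_const_lt (half_lt_self hpos)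
  refine (volume_pos_of_mem_nhdsGE (hvel.and hnear)).ne' ?_
  exact volume_eq_zero_of_forall_eventually_rpow_le_sub hβ (half_pos hpos)
    fun y hy => eventually_mul_rpow_le_sub_of_tendsto hy.1 hy.2

theorem velocity_zero_of_rightContinuous_general (f : ℝ → ℝ) (x β : ℝ) (v : ℝ → ℝ)
    (hβ1 : β < 1)
    (hvel : ∃ δ > (0:ℝ), ∀ y ∈ Ico x (x + δ),
      Tendsto (fun ε : ℝ => (f (y + ε) - f y) / ε ^ β) (𝓝[>] 0) (𝓝 (v y)))
    (hcont : ContinuousWithinAt v (Ici x) x) :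
    v x = 0 := by
  obtain ⟨δ, hδ, hvel⟩ := hvel
  have hnear : ∀ᶠ y in 𝓝[≥] x, y ∈ Ico x (x + δ) := Ico_mem_nhdsGE (by linarith)
  have hle := velocity_nonpos_of_continuousWithinAt hβ1 (hnear.mono hvel) hcont
  have hge := velocity_nonpos_of_continuousWithinAt (f := fun t => -f t) (v := fun t => -v t)
    hβ1 (hnear.mono fun y hy => (hvel y hy).neg.congr fun ε => by ring) hcont.neg
  linarith

/-- (Continuity of fractional velocity forces vanishing) Let `0 < β < 1`.
If `υ⁺_β f(y)` exists finitely (with value `v y`) for all `y` in a right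
neighborhood of `x` and `v` is right-continuous at `x`, then `υ⁺_β f(x) = 0`. -/
theorem velocity_zero_of_rightContinuous (f : ℝ → ℝ) (x β : ℝ) (v : ℝ → ℝ)
    (hβ : 0 < β) (hβ1 : β < 1)
    (hvel : ∃ δ > (0:ℝ), ∀ y ∈ Ico x (x + δ),
      Tendsto (fun ε : ℝ => (f (y + ε) - f y) / ε ^ β) (𝓝[>] 0) (𝓝 (v y)))
    (hcont : ContinuousWithinAt v (Ici x) x) :
    v x = 0 :=
  velocity_zero_of_rightContinuous_general f x β v hβ1 hvel hcont
end

section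
/- (Discontinuous velocity / totally disconnected set of change) Let 0 < β < 1 and suppose υ⁺_β f exists finitely on an interval around x with υ⁺_β f(x) = K ≠ 0, and suppose υ⁺_β f is continuous at x. Then a contradiction follows; in particular the set χ⁺_β(f) = {x : υ⁺_β f(x) ≠ 0} contains no interval (is totally disconnected) whenever υ⁺_β f exists everywhere on an interval. -/
/-!
If the right `β`-velocity of `f` is continuous at `x` with value `K > 0`, it lies in `(K/2, 2K)`
on a whole interval, so every point `y` there has a scale `1/(n+1)` below which
`(K/2) ε^β ≤ f (y + ε) - f y ≤ 2K ε^β`. By Baire's theorem the points sharing one scale are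
dense in some short interval `(c, d)`. Chaining `N + 1` of them across it, about `(d - c)/(2N+1)`
apart, the lower bound on each of the `N` steps and the upper bound on the whole span give
`(K/2) N ≤ 2K (2N+1)^β`, which fails for large `N` because `β < 1`.
-/

open Filter Topology Set

/-- `υ⁺_β f(y) = w`. -/
def HasRightVelocityAt (f : ℝ → ℝ) (β w y : ℝ) : Prop :=
  Tendsto (fun ε : ℝ => (f (y + ε) - f y) / ε ^ β) (𝓝[>] 0) (𝓝 w)

theorem HasRightVelocityAt.neg {f : ℝ → ℝ} {β w y : ℝ} (h : HasRightVelocityAt f β w y) :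
    HasRightVelocityAt (fun t => -f t) β (-w) y := by
  refine (Tendsto.neg h).congr fun ε => ?_
  ring

def boundedIncrementSet (f : ℝ → ℝ) (β A B r : ℝ) : Set ℝ :=
  {y | ∀ ε ∈ Ioc 0 r, f (y + ε) - f y ∈ Icc (A * ε ^ β) (B * ε ^ β)}

theorem HasRightVelocityAt.exists_mem_boundedIncrementSet {f : ℝ → ℝ} {β w y A B : ℝ}
    (h : HasRightVelocityAt f β w y) (hA : A < w) (hB : w < B) :
    ∃ n : ℕ, y ∈ boundedIncrementSet f β A B (1 / (n + 1)) := by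
  obtain ⟨u, hu, hbound⟩ := (nhdsGT_basis (0 : ℝ)).eventually_iff.mp
    (h.eventually (Ioo_mem_nhds hA hB))
  obtain ⟨n, hn⟩ := exists_nat_one_div_lt hu
  refine ⟨n, fun ε ⟨hε0, hεn⟩ => ?_⟩
  have hεβ : 0 < ε ^ β := Real.rpow_pos_of_pos hε0 β
  obtain ⟨hlow, hupp⟩ := hbound ⟨hε0, hεn.trans_lt hn⟩
  exact ⟨((lt_div_iff₀ hεβ).mp hlow).le, ((div_lt_iff₀ hεβ).mp hupp).le⟩

theorem IsOpen.exists_nonempty_interior_closure_of_subset_iUnion {X ι : Type*}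
    [TopologicalSpace X] [BaireSpace X] [Countable ι] {U : Set X} (hU : IsOpen U)
    (hne : U.Nonempty) {E : ι → Set X} (hcover : U ⊆ ⋃ i, E i) :
    ∃ i, (interior (closure (E i))).Nonempty := by
  by_contra! h
  exact not_isMeagre_of_isOpen hU hne
    ((isMeagre_iUnion fun i => IsNowhereDense.isMeagre (h i)).mono hcover)

theorem exists_seq_mem_Ioo_of_Ioo_subset_closure {s : Set ℝ} {c d Δ : ℝ}
    (hs : Ioo c d ⊆ closure s) (hΔ : 0 < Δ) {N : ℕ} (hN : (2 * N + 1) * Δ ≤ d - c) :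
    ∃ p : ℕ → ℝ, ∀ i ≤ N, p i ∈ s ∧ p i ∈ Ioo (c + 2 * i * Δ) (c + (2 * i + 1) * Δ) := by
  have h : ∀ i ≤ N, ∃ q, q ∈ s ∧ q ∈ Ioo (c + 2 * i * Δ) (c + (2 * i + 1) * Δ) := by
    intro i hi
    have hiN : (i : ℝ) ≤ N := by exact_mod_cast hi
    have hsub : Ioo (c + 2 * i * Δ) (c + (2 * i + 1) * Δ) ⊆ Ioo c d :=
      Ioo_subset_Ioo (by nlinarith [i.cast_nonneg (α := ℝ)]) (by nlinarith)
    refine (closure_inter_open_nonempty_iff isOpen_Ioo).mp ⟨c + (2 * i + 1 / 2) * Δ, ?_⟩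
    exact ⟨hs (hsub ⟨by nlinarith, by nlinarith⟩), by nlinarith, by nlinarith⟩
  choose! p hp using h
  exact ⟨p, hp⟩

theorem nat_mul_le_sub_of_le_sub_succ {g : ℕ → ℝ} {m : ℝ} {N : ℕ}
    (h : ∀ i < N, m ≤ g (i + 1) - g i) : N * m ≤ g N - g 0 := by
  induction N with
  | zero => simp
  | succ N ih =>
    push_cast
    linarith [ih fun i hi => h i (by omega), h N (by omega)]

theorem exists_nat_mul_rpow_lt {β A : ℝ} (hβ0 : 0 ≤ β) (hβ1 : β < 1) (hA : 0 < A) (B : ℝ) :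
    ∃ N : ℕ, 1 ≤ N ∧ B * (2 * N + 1) ^ β < A * N := by
  obtain ⟨N, hN, hN1⟩ := (((tendsto_rpow_atTop (sub_pos.mpr hβ1)).comp
    tendsto_natCast_atTop_atTop).eventually_gt_atTop (3 * |B| / A) |>.and
    (eventually_ge_atTop 1)).exists
  refine ⟨N, hN1, ?_⟩
  have hN0 : (0 : ℝ) < N := by exact_mod_cast hN1
  have h3 : (3 : ℝ) ^ β ≤ 3 := by
    simpa using Real.rpow_le_rpow_of_exponent_le (x := 3) (by norm_num) hβ1.le
  calc B * (2 * N + 1) ^ β ≤ |B| * (3 * N) ^ β := by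
        gcongr
        · exact le_abs_self B
        · linarith [(by exact_mod_cast hN1 : (1 : ℝ) ≤ N)]
    _ ≤ |B| * (3 * N ^ β) := by
        rw [Real.mul_rpow (by norm_num) hN0.le]
        gcongr
    _ = 3 * |B| / A * (A * N ^ β) := by field_simp
    _ < N ^ (1 - β) * (A * N ^ β) := by
        gcongr
        exact hN
    _ = A * N := by
        rw [Real.rpow_sub hN0, Real.rpow_one]
        field_simp

theorem mul_le_mul_rpow_of_Ioo_subset_closure {f : ℝ → ℝ} {β A B r c d : ℝ} (hβ : 0 ≤ β)
    (hA : 0 < A) (hr : 0 < r) (hcd : c < d)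
    (hdense : Ioo c d ⊆ closure (boundedIncrementSet f β A B r)) {N : ℕ} (hN : 1 ≤ N) :
    A * N ≤ B * (2 * N + 1) ^ β := by
  set L := min (d - c) r
  have hL : 0 < L := lt_min (sub_pos.mpr hcd) hr
  set Δ := L / (2 * N + 1)
  have hΔ : 0 < Δ := by positivity
  have hNΔ : (2 * N + 1) * Δ = L := mul_div_cancel₀ L (by positivity)
  have hΔN : Δ ≤ N * Δ := le_mul_of_one_le_left hΔ.le (by exact_mod_cast hN)
  have hLr : L ≤ r := min_le_right _ _
  obtain ⟨p, hp⟩ := exists_seq_mem_Ioo_of_Ioo_subset_closure hdense hΔ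
    (hNΔ.trans_le (min_le_left _ _))
  have hstep : ∀ i < N, A * Δ ^ β ≤ f (p (i + 1)) - f (p i) := by
    intro i hi
    obtain ⟨hpi, hpi_gt, hpi_lt⟩ := hp i hi.le
    obtain ⟨-, hpi1_gt, hpi1_lt⟩ := hp (i + 1) hi
    push_cast at hpi1_gt hpi1_lt
    have hgap : p (i + 1) - p i ∈ Ioc 0 r := ⟨by linarith, by linarith⟩
    calc A * Δ ^ β ≤ A * (p (i + 1) - p i) ^ β := by gcongr; linarith
      _ ≤ f (p (i + 1)) - f (p i) := by simpa using (hpi _ hgap).1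
  obtain ⟨hp0, hp0_gt, hp0_lt⟩ := hp 0 (Nat.zero_le N)
  obtain ⟨-, hpN_gt, hpN_lt⟩ := hp N le_rfl
  simp only [Nat.cast_zero, mul_zero, zero_mul, add_zero, zero_add, one_mul] at hp0_gt hp0_lt
  have hspan : p N - p 0 ∈ Ioc 0 L := ⟨by linarith, by linarith⟩
  have hupper := hp0 _ ⟨hspan.1, hspan.2.trans hLr⟩
  rw [add_sub_cancel] at hupper
  have hB : 0 ≤ B :=
    hA.le.trans (le_of_mul_le_mul_right (hupper.1.trans hupper.2) (Real.rpow_pos_of_pos hspan.1 β))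
  refine le_of_mul_le_mul_right ?_ (Real.rpow_pos_of_pos hΔ β)
  calc A * N * Δ ^ β = N * (A * Δ ^ β) := by ring
    _ ≤ f (p N) - f (p 0) := nat_mul_le_sub_of_le_sub_succ (g := fun i => f (p i)) hstep
    _ ≤ B * (p N - p 0) ^ β := hupper.2
    _ ≤ B * L ^ β := by gcongr; exacts [hspan.1.le, hspan.2]
    _ = B * (2 * N + 1) ^ β * Δ ^ β := by
        rw [← hNΔ, Real.mul_rpow (by positivity) hΔ.le, mul_assoc]

theorem false_of_forall_hasRightVelocityAt_mem_Ioo {f : ℝ → ℝ} {β A B a b : ℝ} (hβ0 : 0 ≤ β)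
    (hβ1 : β < 1) (hA : 0 < A) (hab : a < b)
    (hvel : ∀ y ∈ Ioo a b, ∃ w ∈ Ioo A B, HasRightVelocityAt f β w y) : False := by
  have hcover : Ioo a b ⊆ ⋃ n : ℕ, boundedIncrementSet f β A B (1 / (n + 1)) := fun y hy => by
    obtain ⟨w, ⟨hAw, hwB⟩, hw⟩ := hvel y hy
    exact mem_iUnion.mpr (hw.exists_mem_boundedIncrementSet hAw hwB)
  obtain ⟨n, hn⟩ := isOpen_Ioo.exists_nonempty_interior_closure_of_subset_iUnion
    (nonempty_Ioo.mpr hab) hcover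
  obtain ⟨c, d, hcd, hsub⟩ := isOpen_interior.exists_Ioo_subset hn
  obtain ⟨N, hN1, hN⟩ := exists_nat_mul_rpow_lt hβ0 hβ1 hA B
  exact hN.not_ge (mul_le_mul_rpow_of_Ioo_subset_closure hβ0 hA (by positivity) hcd
    (hsub.trans interior_subset) hN1)

/-- (Discontinuous velocity) Let `0 < β < 1` and suppose `υ⁺_β f` exists finitely
(with values `v`) on an interval around `x`, `υ⁺_β f(x) = K ≠ 0`, and `v` is
continuous at `x`. Then a contradiction follows — hence the set of change
`χ⁺_β(f) = {x : υ⁺_β f(x) ≠ 0}` contains no interval. -/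
theorem discontinuous_velocity (f : ℝ → ℝ) (x β K : ℝ) (v : ℝ → ℝ)
    (hβ : 0 < β) (hβ1 : β < 1)
    (hvel : ∃ δ > (0:ℝ), ∀ y ∈ Ioo (x - δ) (x + δ),
      Tendsto (fun ε : ℝ => (f (y + ε) - f y) / ε ^ β) (𝓝[>] 0) (𝓝 (v y)))
    (hK : v x = K) (hK0 : K ≠ 0)
    (hcont : ContinuousAt v x) :
    False := by
  obtain ⟨δ, hδ, hvel⟩ := hvel
  wlog hKpos : 0 < K generalizing f v K
  · exact this (fun t => -f t) (-K) (fun t => -v t) (by rw [hK]) (neg_ne_zero.mpr hK0)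
      hcont.neg (fun y hy => HasRightVelocityAt.neg (hvel y hy))
      (neg_pos.mpr (hK0.lt_or_gt.resolve_right hKpos))
  have hnear : ∀ᶠ y in 𝓝 x, HasRightVelocityAt f β (v y) y ∧ v y ∈ Ioo (K / 2) (2 * K) :=
    (eventually_of_mem (Ioo_mem_nhds (by linarith) (by linarith)) hvel).and
      (hcont.eventually (hK ▸ Ioo_mem_nhds (by linarith) (by linarith)))
  obtain ⟨a, b, hxab, hab⟩ := mem_nhds_iff_exists_Ioo_subset.mp hnear
  exact false_of_forall_hasRightVelocityAt_mem_Ioo hβ.le hβ1 (half_pos hKpos)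
    (hxab.1.trans hxab.2) fun y hy => ⟨v y, (hab hy).2, (hab hy).1⟩
end

section
/- (Fractional Rolle theorem) Let f be continuous on [a,b] with f(a) = f(b), and suppose both one-sided fractional velocities υ⁺_β f and υ⁻_β f of order 0 < β ≤ 1 exist (finitely) at every point of [a,b]. Then there exists c ∈ [a,b] such that either υ⁺_β f(c) ≤ 0 and υ⁻_β f(c) ≥ 0, or υ⁺_β f(c) ≥ 0 and υ⁻_β f(c) ≤ 0. In particular if υ⁺_β f(c) = υ⁻_β f(c) then both equal 0. -/
open Filter Topology Set

/-- (Fractional Rolle theorem) Let `f` be continuous on `[a,b]` with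
`f(a) = f(b)`, and suppose both one-sided fractional velocities of order
`0 < β ≤ 1` exist finitely (with values `vp`, `vm`) at every point of `[a,b]`.
Then there is `c ∈ [a,b]` with `vp c ≤ 0 ∧ vm c ≥ 0` or `vp c ≥ 0 ∧ vm c ≤ 0`;
in particular if `vp c = vm c` then both vanish. -/
theorem fractional_rolle (f : ℝ → ℝ) (a b β : ℝ) (vp vm : ℝ → ℝ)
    (hab : a < b) (hβ : 0 < β) (hβ1 : β ≤ 1)
    (hcont : ContinuousOn f (Icc a b)) (hfab : f a = f b)
    (hvp : ∀ c ∈ Icc a b,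
      Tendsto (fun ε : ℝ => (f (c + ε) - f c) / ε ^ β) (𝓝[>] 0) (𝓝 (vp c)))
    (hvm : ∀ c ∈ Icc a b,
      Tendsto (fun ε : ℝ => (f c - f (c - ε)) / ε ^ β) (𝓝[>] 0) (𝓝 (vm c))) :
    ∃ c ∈ Icc a b,
      ((vp c ≤ 0 ∧ vm c ≥ 0) ∨ (vp c ≥ 0 ∧ vm c ≤ 0)) ∧
      (vp c = vm c → vp c = 0 ∧ vm c = 0) := by
  obtain ⟨cM, hcM, hmax⟩ := isCompact_Icc.exists_isMaxOn (nonempty_Icc.2 hab.le) hcont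
  obtain ⟨cm, hcm, hmin⟩ := isCompact_Icc.exists_isMinOn (nonempty_Icc.2 hab.le) hcont
  -- helper: at an interior max, vp ≤ 0 and vm ≥ 0
  have key : ∀ c ∈ Ioo a b, IsMaxOn f (Icc a b) c → vp c ≤ 0 ∧ vm c ≥ 0 := by
    intro c hc hmx
    have hcI : c ∈ Icc a b := ⟨hc.1.le, hc.2.le⟩
    constructor
    · refine le_of_tendsto (hvp c hcI) ?_
      filter_upwards [Ioo_mem_nhdsGT_of_mem (Set.mem_Ico.2 ⟨le_refl 0, sub_pos.2 hc.2⟩)]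
        with ε hε
      have h1 : c + ε ∈ Icc a b := ⟨by linarith [hc.1, hε.1], by linarith [hε.2]⟩
      have h2 : f (c + ε) ≤ f c := hmx h1
      exact div_nonpos_of_nonpos_of_nonneg (by linarith) (Real.rpow_pos_of_pos hε.1 β).le
    · refine ge_of_tendsto (hvm c hcI) ?_
      filter_upwards [Ioo_mem_nhdsGT_of_mem (Set.mem_Ico.2 ⟨le_refl 0, sub_pos.2 hc.1⟩)]
        with ε hε
      have h1 : c - ε ∈ Icc a b := ⟨by linarith [hε.2], by linarith [hc.2, hε.1]⟩
      have h2 : f (c - ε) ≤ f c := hmx h1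
      exact div_nonneg (by linarith) (Real.rpow_pos_of_pos hε.1 β).le
  have keymin : ∀ c ∈ Ioo a b, IsMinOn f (Icc a b) c → vp c ≥ 0 ∧ vm c ≤ 0 := by
    intro c hc hmn
    have hcI : c ∈ Icc a b := ⟨hc.1.le, hc.2.le⟩
    constructor
    · refine ge_of_tendsto (hvp c hcI) ?_
      filter_upwards [Ioo_mem_nhdsGT_of_mem (Set.mem_Ico.2 ⟨le_refl 0, sub_pos.2 hc.2⟩)]
        with ε hε
      have h1 : c + ε ∈ Icc a b := ⟨by linarith [hc.1, hε.1], by linarith [hε.2]⟩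
      have h2 : f c ≤ f (c + ε) := hmn h1
      exact div_nonneg (by linarith) (Real.rpow_pos_of_pos hε.1 β).le
    · refine le_of_tendsto (hvm c hcI) ?_
      filter_upwards [Ioo_mem_nhdsGT_of_mem (Set.mem_Ico.2 ⟨le_refl 0, sub_pos.2 hc.1⟩)]
        with ε hε
      have h1 : c - ε ∈ Icc a b := ⟨by linarith [hε.2], by linarith [hc.2, hε.1]⟩
      have h2 : f c ≤ f (c - ε) := hmn h1
      exact div_nonpos_of_nonpos_of_nonneg (by linarith) (Real.rpow_pos_of_pos hε.1 β).le
  by_cases hM : f a < f cM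
  · have hcMo : cM ∈ Ioo a b := by
      rcases hcM.1.lt_or_eq with h | h
      · rcases hcM.2.lt_or_eq with h' | h'
        · exact ⟨h, h'⟩
        · exfalso; rw [h'] at hM; exact absurd hfab (by rw [hfab] at hM; linarith)
      · exfalso; rw [← h] at hM; exact lt_irrefl _ hM
    obtain ⟨h1, h2⟩ := key cM hcMo hmax
    exact ⟨cM, ⟨hcMo.1.le, hcMo.2.le⟩, Or.inl ⟨h1, h2⟩,
      fun he => ⟨le_antisymm h1 (he ▸ h2), le_antisymm (he ▸ h1) h2⟩⟩
  · by_cases hm : f cm < f a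
    · have hcmo : cm ∈ Ioo a b := by
        rcases hcm.1.lt_or_eq with h | h
        · rcases hcm.2.lt_or_eq with h' | h'
          · exact ⟨h, h'⟩
          · exfalso; rw [h', ← hfab] at hm; exact lt_irrefl _ hm
        · exfalso; rw [← h] at hm; exact lt_irrefl _ hm
      obtain ⟨h1, h2⟩ := keymin cm hcmo hmin
      exact ⟨cm, ⟨hcmo.1.le, hcmo.2.le⟩, Or.inr ⟨h1, h2⟩,
        fun he => ⟨le_antisymm (he ▸ h2) h1, le_antisymm h2 (he ▸ h1)⟩⟩
    · -- f is constant on [a,b]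
      push_neg at hM hm
      have hconst : ∀ x ∈ Icc a b, f x = f a := by
        intro x hx
        have h1 : f x ≤ f cM := hmax hx
        have h2 : f cm ≤ f x := hmin hx
        linarith
      set c := (a + b) / 2 with hc
      have hco : c ∈ Ioo a b := ⟨by simp [hc]; linarith, by simp [hc]; linarith⟩
      have hcI : c ∈ Icc a b := ⟨hco.1.le, hco.2.le⟩
      have hvp0 : vp c = 0 := by
        refine tendsto_nhds_unique (hvp c hcI) ?_
        refine Tendsto.congr' ?_ tendsto_const_nhds
        filter_upwards [Ioo_mem_nhdsGT_of_mem (Set.mem_Ico.2 ⟨le_refl 0, sub_pos.2 hco.2⟩)]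
          with ε hε
        have h1 : c + ε ∈ Icc a b := ⟨by linarith [hco.1, hε.1], by linarith [hε.2]⟩
        rw [hconst _ h1, hconst _ hcI, sub_self, zero_div]
      have hvm0 : vm c = 0 := by
        refine tendsto_nhds_unique (hvm c hcI) ?_
        refine Tendsto.congr' ?_ tendsto_const_nhds
        filter_upwards [Ioo_mem_nhdsGT_of_mem (Set.mem_Ico.2 ⟨le_refl 0, sub_pos.2 hco.1⟩)]
          with ε hε
        have h1 : c - ε ∈ Icc a b := ⟨by linarith [hε.2], by linarith [hco.2, hε.1]⟩
        rw [hconst _ h1, hconst _ hcI, sub_self, zero_div]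
      exact ⟨c, hcI, Or.inl ⟨hvp0.le, hvm0.ge⟩, fun _ => ⟨hvp0, hvm0⟩⟩
end
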